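/- arXiv:2111.12813 — 2 statements merged into one kernel-verified Lean document; each statement's English description precedes it below -/
import Mathlib

section
/- Let C be an L-convergence on a set S (a sequential convergence with unique limits), and let T(C) be the topology whose open sets are those U ⊆ S such that every C-convergent sequence with limit in U is eventually in U. Then a sequence s_n converges to s in the topology T(C) if and only if every subsequence of (s_n) has a further subsequence that C-converges to s. -/
/-!
`C`-convergence to `s` implies `T(C)`-convergence, and `T(C)`-convergence is detected on
subsequences; this gives one direction. Conversely, suppose no subsequence of `u` `C`-converges
to `s`. Passing to a subsequence, `u` never takes the value `s` and, by uniqueness of limits, has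
at most one subsequential `C`-limit. The range of `u` together with its subsequential limits is
then `T(C)`-closed and misses `s`. Closedness holds because a `C`-convergent sequence with values
in the range of `u` has a subsequence that is either constant or a subsequence of `u`.
-/

open Filter Topology

/-- The topology induced by a sequential convergence `C`: a set `U` is open iff every
`C`-convergent sequence with limit in `U` is eventually in `U`. -/
def seqTop {S : Type*} (C : (ℕ → S) → S → Prop) : TopologicalSpace S where
  IsOpen U := ∀ (u : ℕ → S) (s : S), C u s → s ∈ U → ∀ᶠ n in atTop, u n ∈ U
  isOpen_univ := fun _ _ _ _ => Eventually.of_forall fun _ => trivial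
  isOpen_inter := fun _ _ hU hV u s hC hs => (hU u s hC hs.1).and (hV u s hC hs.2)
  isOpen_sUnion := fun 𝒮 h u s hC hs => by
    obtain ⟨U, hU, hsU⟩ := hs
    exact (h U hU u s hC hsU).mono fun n hn => ⟨U, hU, hn⟩

open Set

theorem Nat.exists_frequently_eq_or_exists_strictMono_comp (m : ℕ → ℕ) :
    (∃ j, ∃ᶠ k in atTop, m k = j) ∨ ∃ χ : ℕ → ℕ, StrictMono χ ∧ StrictMono (m ∘ χ) := by
  by_cases h : ∃ j, ∃ᶠ k in atTop, m k = j
  · exact .inl h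
  right
  push Not at h
  have hfin : ∀ j, {k | m k = j}.Finite := fun j => by
    have hj : ∀ᶠ k in cofinite, m k ≠ j := Nat.cofinite_eq_atTop ▸ h j
    simpa only [eventually_cofinite, not_not] using hj
  have hm : Tendsto m atTop atTop := by
    simpa only [Nat.cofinite_eq_atTop] using
      Tendsto.cofinite_of_finite_preimage_singleton fun j => (hfin j).to_subtype
  exact strictMono_subseq_of_tendsto_atTop hm

section SeqTop

variable {S : Type*} (C : (ℕ → S) → S → Prop)

def subseqLimits (w : ℕ → S) : Set S :=
  {t | ∃ ρ : ℕ → ℕ, StrictMono ρ ∧ C (w ∘ ρ) t}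

variable {C}

theorem tendsto_seqTop_of_conv {u : ℕ → S} {s : S} (h : C u s) :
    Tendsto u atTop (@nhds S (seqTop C) s) :=
  let := seqTop C
  tendsto_nhds.mpr fun _ hU hsU => hU u s h hsU

theorem isClosed_seqTop_of_frequently {F : Set S}
    (hF : ∀ (z : ℕ → S) (r : S), C z r → (∃ᶠ n in atTop, z n ∈ F) → r ∈ F) :
    IsClosed[seqTop C] F := by
  refine @isOpen_compl_iff _ F (seqTop C) |>.mp fun z r hz hr => ?_
  by_contra h
  exact hr (hF z r hz (by simpa only [not_eventually, mem_compl_iff, not_not] using h))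

theorem eq_of_conv_of_frequently_eq (hconst : ∀ s : S, C (fun _ => s) s)
    (hsub : ∀ (u : ℕ → S) (s : S) (φ : ℕ → ℕ), StrictMono φ → C u s → C (u ∘ φ) s)
    (huniq : ∀ (u : ℕ → S) (s t : S), C u s → C u t → s = t)
    {z : ℕ → S} {r t : S} (hz : C z r) (hfreq : ∃ᶠ n in atTop, z n = t) : r = t := by
  obtain ⟨χ, hχ, hzχ⟩ := extraction_of_frequently_atTop hfreq
  have hconst_t : z ∘ χ = fun _ => t := funext hzχ
  exact huniq _ r t (hconst_t ▸ hsub z r χ hχ hz) (hconst t)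

theorem exists_strictMono_subsingleton_subseqLimits
    (hsub : ∀ (u : ℕ → S) (s : S) (φ : ℕ → ℕ), StrictMono φ → C u s → C (u ∘ φ) s)
    (huniq : ∀ (u : ℕ → S) (s t : S), C u s → C u t → s = t) (w : ℕ → S) :
    ∃ ψ : ℕ → ℕ, StrictMono ψ ∧ (subseqLimits C (w ∘ ψ)).Subsingleton := by
  by_cases h : ∃ t, t ∈ subseqLimits C w
  · obtain ⟨t, ψ, hψ, hwψ⟩ := h
    refine ⟨ψ, hψ, fun r₁ ⟨ρ₁, hρ₁, h₁⟩ r₂ ⟨ρ₂, hρ₂, h₂⟩ => ?_⟩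
    rw [huniq _ r₁ t h₁ (hsub _ t ρ₁ hρ₁ hwψ), huniq _ r₂ t h₂ (hsub _ t ρ₂ hρ₂ hwψ)]
  · push Not at h
    exact ⟨id, strictMono_id, fun r hr => absurd hr (h r)⟩

theorem mem_range_or_mem_subseqLimits_of_conv (hconst : ∀ s : S, C (fun _ => s) s)
    (hsub : ∀ (u : ℕ → S) (s : S) (φ : ℕ → ℕ), StrictMono φ → C u s → C (u ∘ φ) s)
    (huniq : ∀ (u : ℕ → S) (s t : S), C u s → C u t → s = t)
    {w z : ℕ → S} {r : S} (hz : C z r) (hfreq : ∃ᶠ n in atTop, z n ∈ range w) :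
    r ∈ range w ∪ subseqLimits C w := by
  obtain ⟨χ, hχ, hzχ⟩ := extraction_of_frequently_atTop hfreq
  choose m hm using hzχ
  have hzχ_conv : C (z ∘ χ) r := hsub z r χ hχ hz
  rcases Nat.exists_frequently_eq_or_exists_strictMono_comp m with ⟨j, hj⟩ | ⟨ρ, hρ, hmρ⟩
  · refine .inl ⟨j, (eq_of_conv_of_frequently_eq hconst hsub huniq hzχ_conv ?_).symm⟩
    exact hj.mono fun k hk => by simp only [Function.comp_apply, ← hm k, hk]
  · refine .inr ⟨m ∘ ρ, hmρ, ?_⟩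
    have hw : w ∘ (m ∘ ρ) = z ∘ χ ∘ ρ := funext fun k => hm (ρ k)
    exact hw ▸ hsub _ r ρ hρ hzχ_conv

theorem isClosed_seqTop_range_union_subseqLimits (hconst : ∀ s : S, C (fun _ => s) s)
    (hsub : ∀ (u : ℕ → S) (s : S) (φ : ℕ → ℕ), StrictMono φ → C u s → C (u ∘ φ) s)
    (huniq : ∀ (u : ℕ → S) (s t : S), C u s → C u t → s = t)
    {w : ℕ → S} (hw : (subseqLimits C w).Subsingleton) :
    IsClosed[seqTop C] (range w ∪ subseqLimits C w) := by
  refine isClosed_seqTop_of_frequently fun z r hz hfreq => ?_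
  rcases frequently_or_distrib.mp hfreq with hrange | hlim
  · exact mem_range_or_mem_subseqLimits_of_conv hconst hsub huniq hz hrange
  · obtain ⟨n, hn⟩ := hlim.exists
    have hzt : ∃ᶠ k in atTop, z k = z n := hlim.mono fun k hk => hw hk hn
    exact .inr (eq_of_conv_of_frequently_eq hconst hsub huniq hz hzt ▸ hn)

theorem exists_subseq_conv_of_tendsto_seqTop (hconst : ∀ s : S, C (fun _ => s) s)
    (hsub : ∀ (u : ℕ → S) (s : S) (φ : ℕ → ℕ), StrictMono φ → C u s → C (u ∘ φ) s)
    (huniq : ∀ (u : ℕ → S) (s t : S), C u s → C u t → s = t)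
    {u : ℕ → S} {s : S} (hu : Tendsto u atTop (@nhds S (seqTop C) s)) :
    ∃ ψ : ℕ → ℕ, StrictMono ψ ∧ C (u ∘ ψ) s := by
  let := seqTop C
  by_contra hno
  have hne : ∃ᶠ n in atTop, u n ≠ s := by
    by_contra h
    obtain ⟨χ, hχ, huχ⟩ := extraction_of_frequently_atTop (not_frequently.mp h).frequently
    have hconst_s : u ∘ χ = fun _ => s := funext fun n => not_not.mp (huχ n)
    exact hno ⟨χ, hχ, hconst_s ▸ hconst s⟩
  obtain ⟨χ, hχ, huχ⟩ := extraction_of_frequently_atTop hne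
  obtain ⟨ψ, hψ, hlim⟩ := exists_strictMono_subsingleton_subseqLimits hsub huniq (u ∘ χ)
  set w := u ∘ χ ∘ ψ
  have hs : s ∉ range w ∪ subseqLimits C w := by
    rintro (⟨n, hn⟩ | ⟨ρ, hρ, hwρ⟩)
    · exact huχ (ψ n) hn
    · exact hno ⟨χ ∘ ψ ∘ ρ, hχ.comp (hψ.comp hρ), hwρ⟩
  have hopen : IsOpen (range w ∪ subseqLimits C w)ᶜ :=
    (isClosed_seqTop_range_union_subseqLimits hconst hsub huniq hlim).isOpen_compl
  have hw : Tendsto w atTop (𝓝 s) := hu.comp (hχ.comp hψ).tendsto_atTop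
  obtain ⟨n, hn⟩ := (hw.eventually_mem (hopen.mem_nhds hs)).exists
  exact hn (.inl ⟨n, rfl⟩)

end SeqTop

/-- For an L-convergence `C` (a sequential convergence with unique limits), a sequence
converges to `s` in the topology `T(C)` iff every subsequence has a further subsequence
that `C`-converges to `s`. -/
theorem stmt0 {S : Type*} (C : (ℕ → S) → S → Prop)
    (hconst : ∀ s : S, C (fun _ => s) s)
    (hsub : ∀ (u : ℕ → S) (s : S) (φ : ℕ → ℕ), StrictMono φ → C u s → C (u ∘ φ) s)
    (huniq : ∀ (u : ℕ → S) (s t : S), C u s → C u t → s = t)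
    (u : ℕ → S) (s : S) :
    Tendsto u atTop (@nhds S (seqTop C) s) ↔
      ∀ φ : ℕ → ℕ, StrictMono φ → ∃ ψ : ℕ → ℕ, StrictMono ψ ∧ C (u ∘ φ ∘ ψ) s := by
  refine ⟨fun hu φ hφ => ?_, fun H => ?_⟩
  · exact exists_subseq_conv_of_tendsto_seqTop hconst hsub huniq (hu.comp hφ.tendsto_atTop)
  · refine tendsto_of_subseq_tendsto fun ns hns => ?_
    obtain ⟨φ, hφ, hnsφ⟩ := strictMono_subseq_of_tendsto_atTop hns
    obtain ⟨ψ, -, hC⟩ := H (ns ∘ φ) hnsφ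
    exact ⟨φ ∘ ψ, tendsto_seqTop_of_conv hC⟩
end

section
/- Let (S, 𝒯) be a Hausdorff topological space that is a countable union S = ∪_m K_m of compact metrizable subspaces K_m, and let Ψ : S → ℂ^ℕ be a continuous injection. Then for every closed set F ⊆ S and every m, the image Ψ(F ∩ K_m) is a compact subset of ℂ^ℕ; consequently Ψ maps Borel sets of S to Borel sets of ℂ^ℕ, and two Borel probability measures μ, ν on S with equal pushforwards Ψ_*μ = Ψ_*ν must be equal. -/
open MeasureTheory

/-- Let `S` be a Hausdorff space that is a countable union of compact metrizable subspaces,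
and `Ψ : S → ℂ^ℕ` a continuous injection. Then images under `Ψ` of intersections of closed
sets with the compact pieces are compact, `Ψ` maps Borel sets to Borel sets, and two Borel
probability measures with equal pushforwards under `Ψ` are equal. -/
theorem stmt19 (S : Type*) [TopologicalSpace S] [T2Space S]
    [MeasurableSpace S] [BorelSpace S]
    (K : ℕ → Set S) (hKcover : (⋃ m, K m) = Set.univ)
    (hKcomp : ∀ m, IsCompact (K m))
    (hKmetr : ∀ m, TopologicalSpace.MetrizableSpace (K m))
    (Ψ : S → (ℕ → ℂ)) (hΨc : Continuous Ψ) (hΨi : Function.Injective Ψ)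
    (μ ν : Measure S) [IsProbabilityMeasure μ] [IsProbabilityMeasure ν]
    (hpush : μ.map Ψ = ν.map Ψ) :
    (∀ F : Set S, IsClosed F → ∀ m, IsCompact (Ψ '' (F ∩ K m))) ∧
    (∀ B : Set S, MeasurableSet B → MeasurableSet (Ψ '' B)) ∧
    μ = ν := by
  -- Each piece `K m`, as a subtype, is a Polish space.
  have hPolish : ∀ m, PolishSpace (K m) := fun m => by
    haveI : CompactSpace (K m) := isCompact_iff_compactSpace.1 (hKcomp m)
    haveI := hKmetr m
    letI := TopologicalSpace.metrizableSpaceMetric (K m)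
    infer_instance
  -- The restriction of Ψ to each piece is a measurable embedding.
  have hemb : ∀ m, MeasurableEmbedding (fun x : K m => Ψ x) := fun m => by
    haveI := hPolish m
    exact (hΨc.comp continuous_subtype_val).measurableEmbedding
      (hΨi.comp Subtype.val_injective)
  -- Borel sets are mapped to Borel sets.
  have himg : ∀ B : Set S, MeasurableSet B → MeasurableSet (Ψ '' B) := by
    intro B hB
    have key : Ψ '' B = ⋃ m, (fun x : K m => Ψ x) '' (Subtype.val ⁻¹' B) := by
      ext y
      simp only [Set.mem_image, Set.mem_iUnion, Set.mem_preimage]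
      constructor
      · rintro ⟨x, hxB, rfl⟩
        have hx : x ∈ ⋃ m, K m := hKcover ▸ Set.mem_univ x
        obtain ⟨m, hm⟩ := Set.mem_iUnion.1 hx
        exact ⟨m, ⟨x, hm⟩, hxB, rfl⟩
      · rintro ⟨m, ⟨x, hx⟩, hxB, rfl⟩
        exact ⟨x, hxB, rfl⟩
    rw [key]
    exact MeasurableSet.iUnion fun m =>
      (hemb m).measurableSet_image.2 (measurable_subtype_coe hB)
  refine ⟨fun F hF m => (((hKcomp m).inter_left hF).image hΨc),
    himg, ?_⟩
  -- Equality of measures.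
  ext B hB
  have hΨm : Measurable Ψ := hΨc.measurable
  have hpre : Ψ ⁻¹' (Ψ '' B) = B := Set.preimage_image_eq B hΨi
  calc μ B = μ (Ψ ⁻¹' (Ψ '' B)) := by rw [hpre]
    _ = (μ.map Ψ) (Ψ '' B) := (Measure.map_apply hΨm (himg B hB)).symm
    _ = (ν.map Ψ) (Ψ '' B) := by rw [hpush]
    _ = ν (Ψ ⁻¹' (Ψ '' B)) := Measure.map_apply hΨm (himg B hB)
    _ = ν B := by rw [hpre]
end
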